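/- arXiv:2507.00913 — 3 statements merged into one kernel-verified Lean document; each statement's English description precedes it below -/
import Mathlib

section
/- Let f: D^2 → A be unanimous, tops-only, and locally strategy-proof, and let (a^1, ..., a^k) be a path in the induced graph G(D) with k ≥ 3. If f(P_1, P_2) = a^1 whenever r_1(P_1) = a^1 and r_1(P_2) = a^2, then f(P_1, P_2) = a^1 whenever r_1(P_1) = a^1 and r_1(P_2) = a^k. -/
open Relation

/-- A preference is a ranking: a bijection from alternatives to ranks (0 = best). -/
abbrev Pref (A : Type*) [Fintype A] := A ≃ Fin (Fintype.card A)

namespace Pref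

variable {A : Type*} [Fintype A]

/-- The rank (as a natural number, 0 = best) of alternative `a` in preference `P`. -/
def rk (P : Pref A) (a : A) : ℕ := (P a : ℕ)

/-- The top-ranked alternative of `P`. -/
noncomputable def top [Nonempty A] (P : Pref A) : A := P.symm ⟨0, Fintype.card_pos⟩

/-- `a` is strictly preferred to `b` under `P`. -/
def SPrefers (P : Pref A) (a b : A) : Prop := rk P a < rk P b

/-- Two preferences are adjacent if they differ by one swap of consecutively
ranked alternatives. -/
def Adjacent (P P' : Pref A) : Prop :=
  ∃ a b : A, rk P a = rk P b + 1 ∧ rk P' a = rk P b ∧ rk P' b = rk P a ∧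
    ∀ c : A, c ≠ a → c ≠ b → rk P c = rk P' c

end Pref

open Pref

variable {A : Type*} [Fintype A] [Nonempty A]

/-- One step between members of the domain `D` along adjacent preferences. -/
def StepRel (D : Set (Pref A)) (P Q : Pref A) : Prop := P ∈ D ∧ Q ∈ D ∧ Adjacent P Q

/-- The domain `D` is connected: any two members are joined by a path of
adjacent preferences inside `D`. -/
def DConnected (D : Set (Pref A)) : Prop :=
  ∀ P ∈ D, ∀ Q ∈ D, ReflTransGen (StepRel D) P Q

/-- One step inside `D` along adjacent preferences keeping the same top. -/
def TStepRel (D : Set (Pref A)) (P Q : Pref A) : Prop :=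
  StepRel D P Q ∧ Pref.top P = Pref.top Q

/-- The top-connected closure of `P` in `D`. -/
def TCC (D : Set (Pref A)) (P : Pref A) : Set (Pref A) :=
  {Q | ReflTransGen (TStepRel D) P Q}

/-- Neighbours of a subset `S` inside the domain `D`. -/
def Nbr (D S : Set (Pref A)) : Set (Pref A) :=
  {Q | Q ∈ D ∧ Q ∉ S ∧ ∃ P ∈ S, Adjacent P Q}

/-- `D` is connected with two distinct neighbours. -/
def CDN (D : Set (Pref A)) : Prop :=
  DConnected D ∧
    ∀ P ∈ D, ∃ Q ∈ Nbr D (TCC D P), ∃ R ∈ Nbr D (TCC D P), Pref.top Q ≠ Pref.top R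

/-- Every alternative is top-ranked in some preference of `D`. -/
def MinimallyRich (D : Set (Pref A)) : Prop := ∀ a : A, ∃ P ∈ D, Pref.top P = a

/-- The edge relation of the induced graph `G(D)` on alternatives. -/
def EdgeD (D : Set (Pref A)) (a b : A) : Prop :=
  ∃ P ∈ D, ∃ P' ∈ D, Adjacent P P' ∧
    Pref.top P = a ∧ Pref.top P' = b ∧ rk P b = 1 ∧ rk P' a = 1

/-- `v 0, v 1, …, v (k-1)` is a path in the induced graph `G(D)`. -/
def IsPathD (D : Set (Pref A)) (k : ℕ) (v : ℕ → A) : Prop :=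
  (∀ i j, i < k → j < k → v i = v j → i = j) ∧
    ∀ i, i + 1 < k → EdgeD D (v i) (v (i + 1))

/-- Connected component of `P` in `D`. -/
def Component (D : Set (Pref A)) (P : Pref A) : Set (Pref A) :=
  {Q | Q ∈ D ∧ ReflTransGen (StepRel D) P Q}

section SCF

variable {n : ℕ} (D : Set (Pref A))

/-- Unanimity. -/
def Unanimous (f : (Fin n → D) → A) : Prop :=
  ∀ (P : Fin n → D) (a : A), (∀ i, Pref.top (P i : Pref A) = a) → f P = a

/-- Local strategy-proofness. -/
def LocallySP (f : (Fin n → D) → A) : Prop :=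
  ∀ (P : Fin n → D) (i : Fin n) (Q : D), Adjacent (P i : Pref A) (Q : Pref A) →
    ¬ SPrefers (P i : Pref A) (f (Function.update P i Q)) (f P)

/-- (Global) strategy-proofness. -/
def StrategyProof (f : (Fin n → D) → A) : Prop :=
  ∀ (P : Fin n → D) (i : Fin n) (Q : D),
    ¬ SPrefers (P i : Pref A) (f (Function.update P i Q)) (f P)

/-- Tops-onlyness. -/
def TopsOnly (f : (Fin n → D) → A) : Prop :=
  ∀ P P' : Fin n → D,
    (∀ i, Pref.top (P i : Pref A) = Pref.top (P' i : Pref A)) → f P = f P'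

/-- Dictatorship. -/
def Dictatorial (f : (Fin n → D) → A) : Prop :=
  ∃ i : Fin n, ∀ P : Fin n → D, f P = Pref.top (P i : Pref A)

/-- Voter `i` is decisive over `a`. -/
def Decisive (f : (Fin n → D) → A) (i : Fin n) (a : A) : Prop :=
  ∀ P : Fin n → D, Pref.top (P i : Pref A) = a → f P = a

end SCF

section Aux

variable {A : Type*} [Fintype A]

lemma rk_inj (P : Pref A) {s t : A} (h : rk P s = rk P t) : s = t :=
  P.injective (Fin.val_injective h)

lemma rk_top_eq_zero [Nonempty A] (P : Pref A) : rk P (Pref.top P) = 0 := by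
  simp [rk, Pref.top]

lemma adjacent_symm {P Q : Pref A} (h : Adjacent P Q) : Adjacent Q P := by
  obtain ⟨a, b, h1, h2, h3, h4⟩ := h
  exact ⟨b, a, by omega, by omega, by omega, fun c hc1 hc2 => (h4 c hc2 hc1).symm⟩

variable [Nonempty A]

/-- Key step: decisiveness over edge `b` extends along an edge `(b, c)` of `G(D)`. -/
lemma key_step (D : Set (Pref A)) (f : (Fin 2 → D) → A)
    (hto : TopsOnly D f) (hlsp : LocallySP D f)
    (a b c : A) (hab : a ≠ b) (hac : a ≠ c) (hbc : b ≠ c)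
    (hedge : EdgeD D b c)
    (IH : ∀ P : Fin 2 → D, Pref.top (P 0 : Pref A) = a →
      Pref.top (P 1 : Pref A) = b → f P = a) :
    ∀ P : Fin 2 → D, Pref.top (P 0 : Pref A) = a →
      Pref.top (P 1 : Pref A) = c → f P = a := by
  intro P h0 h1
  obtain ⟨Pb, hPb, Pc, hPc, hadj, htb, htc, hrb, hrc⟩ := hedge
  -- hrb : rk Pb c = 1, hrc : rk Pc b = 1
  have hPbb : rk Pb b = 0 := htb ▸ rk_top_eq_zero Pb
  have hPcc : rk Pc c = 0 := htc ▸ rk_top_eq_zero Pc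
  set profB : Fin 2 → D := ![P 0, ⟨Pb, hPb⟩] with hprofB
  set profC : Fin 2 → D := ![P 0, ⟨Pc, hPc⟩] with hprofC
  have hfB : f profB = a := by
    apply IH
    · simpa [profB] using h0
    · simpa [profB] using htb
  have hfP : f P = f profC := by
    apply hto
    intro i
    fin_cases i
    · simp [profC]
    · simpa [profC, htc] using h1
  have hupd1 : Function.update profC 1 ⟨Pb, hPb⟩ = profB := by
    funext i
    fin_cases i <;> simp [profB, profC, Function.update]
  have hupd2 : Function.update profB 1 ⟨Pc, hPc⟩ = profC := by
    funext i
    fin_cases i <;> simp [profB, profC, Function.update]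
  have l1 := hlsp profC 1 ⟨Pb, hPb⟩ (by simpa [profC] using adjacent_symm hadj)
  have l2 := hlsp profB 1 ⟨Pc, hPc⟩ (by simpa [profB] using hadj)
  rw [hupd1, hfB] at l1
  rw [hupd2] at l2
  rw [hfB] at l2
  set x := f profC with hx
  simp only [SPrefers, not_lt, profC, profB, Matrix.cons_val_one, Matrix.head_cons, Matrix.cons_val_zero] at l1 l2
  -- l1 : rk Pc x ≤ rk Pc a, l2 : rk Pb a ≤ rk Pb x
  obtain ⟨p, q, e1, e2, e3, e4⟩ := hadj
  have hbpq : b = p ∨ b = q := by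
    by_contra hcon
    push_neg at hcon
    have := e4 b hcon.1 hcon.2
    omega
  have hcpq : c = p ∨ c = q := by
    by_contra hcon
    push_neg at hcon
    have := e4 c hcon.1 hcon.2
    omega
  have hsame : ∀ z : A, z ≠ b → z ≠ c → rk Pb z = rk Pc z := by
    intro z hz1 hz2
    rcases hbpq with hb | hb <;> rcases hcpq with hc | hc
    · exact absurd (hb.trans hc.symm) hbc
    · exact e4 z (hb ▸ hz1) (hc ▸ hz2)
    · exact e4 z (hc ▸ hz2) (hb ▸ hz1)
    · exact absurd (hb.trans hc.symm) hbc
  have haeq : rk Pb a = rk Pc a := hsame a hab hac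
  have hge2 : 2 ≤ rk Pb a := by
    have h0' : rk Pb a ≠ 0 := fun h => hab (rk_inj Pb (h.trans hPbb.symm))
    have h1' : rk Pb a ≠ 1 := fun h => hac (rk_inj Pb (h.trans hrb.symm))
    omega
  have hxa : x = a := by
    by_cases hxb : x = b
    · subst hxb; omega
    by_cases hxc : x = c
    · subst hxc; omega
    have hxeq : rk Pb x = rk Pc x := hsame x hxb hxc
    exact rk_inj Pb (by omega)
  rw [hfP]; exact hxa

end Aux

/-- Claim 3: decisiveness of voter 1 along the first edge of a path in `G(D)`
extends to profiles where voter 2 tops the endpoint of the path. -/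
theorem stmt9 {A : Type*} [Fintype A] [Nonempty A] (hA : 3 ≤ Fintype.card A)
    (D : Set (Pref A)) (f : (Fin 2 → D) → A)
    (hu : Unanimous D f) (hto : TopsOnly D f) (hlsp : LocallySP D f)
    (k : ℕ) (hk : 3 ≤ k) (v : ℕ → A) (hpath : IsPathD D k v)
    (hbase : ∀ P : Fin 2 → D, Pref.top (P 0 : Pref A) = v 0 →
      Pref.top (P 1 : Pref A) = v 1 → f P = v 0) :
    ∀ P : Fin 2 → D, Pref.top (P 0 : Pref A) = v 0 →
      Pref.top (P 1 : Pref A) = v (k - 1) → f P = v 0 := by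
  obtain ⟨hinj, hedges⟩ := hpath
  have main : ∀ j, j < k → 1 ≤ j → ∀ P : Fin 2 → D,
      Pref.top (P 0 : Pref A) = v 0 → Pref.top (P 1 : Pref A) = v j → f P = v 0 := by
    intro j
    induction j with
    | zero => omega
    | succ n ih =>
      intro hlt h1
      rcases Nat.eq_zero_or_pos n with hn | hn
      · subst hn; exact hbase
      · have hne : ∀ i j, i < k → j < k → i ≠ j → v i ≠ v j := by
          intro i j hi hj hij hv
          exact hij (hinj i j hi hj hv)
        exact key_step D f hto hlsp (v 0) (v n) (v (n + 1))
          (hne 0 n (by omega) (by omega) (by omega))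
          (hne 0 (n + 1) (by omega) hlt (by omega))
          (hne n (n + 1) (by omega) hlt (by omega))
          (hedges n hlt) (ih (by omega) hn)
  exact main (k - 1) (by omega) (by omega)
end

section
/- Let f: D^n → A be unanimous, tops-only, and locally strategy-proof, and let (a^1, ..., a^k) be a path in G(D) with k ≥ 2. Suppose P ∈ D^n satisfies f(P) = r_1(P_i) = a^k and r_1(P_j) = a^1 for distinct voters i, j. Then for every P'_j ∈ D with r_1(P'_j) = a^k, f(P'_j, P_{-j}) = a^k. -/
open Relation

open Pref

variable {A : Type*} [Fintype A] [Nonempty A]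

lemma Pref.rk_injective' {A : Type*} [Fintype A] (P : Pref A) : Function.Injective (rk P) :=
  fun _ _ h => P.injective (Fin.ext h)

lemma Pref.rk_top' {A : Type*} [Fintype A] [Nonempty A] (P : Pref A) : rk P P.top = 0 := by
  simp [rk, top]

lemma Pref.eq_top_of_rk' {A : Type*} [Fintype A] [Nonempty A] (P : Pref A) {a : A}
    (h : rk P a = 0) : a = P.top :=
  P.rk_injective' (by rw [h, Pref.rk_top'])

lemma Pref.Adjacent.symm' {A : Type*} [Fintype A] {P Q : Pref A} (h : Adjacent P Q) :
    Adjacent Q P := by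
  obtain ⟨a, b, h1, h2, h3, h4⟩ := h
  exact ⟨b, a, by omega, by omega, by omega, fun c hc1 hc2 => (h4 c hc2 hc1).symm⟩

/-- Claim 8: if the outcome is voter `i`'s top `a^k`, the endpoint of a path of
`G(D)` starting at voter `j`'s top, then moving voter `j`'s top to `a^k` keeps
the outcome `a^k`. -/
theorem stmt15 {A : Type*} [Fintype A] [Nonempty A] (hA : 3 ≤ Fintype.card A)
    (D : Set (Pref A)) (n : ℕ) (hn : 2 ≤ n) (f : (Fin n → D) → A)
    (hu : Unanimous D f) (hto : TopsOnly D f) (hlsp : LocallySP D f)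
    (k : ℕ) (hk : 2 ≤ k) (v : ℕ → A) (hpath : IsPathD D k v)
    (P : Fin n → D) (i j : Fin n) (hij : i ≠ j)
    (hfP : f P = Pref.top (P i : Pref A))
    (hi : Pref.top (P i : Pref A) = v (k - 1))
    (hj : Pref.top (P j : Pref A) = v 0) :
    ∀ Q : D, Pref.top (Q : Pref A) = v (k - 1) →
      f (Function.update P j Q) = v (k - 1) := by

  have vne : ∀ p q, p < k → q < k → p ≠ q → v p ≠ v q := by
    intro p q hp hq hpq he
    exact hpq (hpath.1 p q hp hq he)
  have hfPk : f P = v (k - 1) := hfP.trans hi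
  have main : ∀ m, m ≤ k - 1 → ∀ R : D, Pref.top (R : Pref A) = v m →
      f (Function.update P j R) = v (k - 1) := by
    intro m
    induction m with
    | zero =>
      intro _ R hR
      have heq : f (Function.update P j R) = f P := by
        apply hto
        intro t
        by_cases ht : t = j
        · subst ht; simp [hR, hj]
        · simp [Function.update_of_ne ht]
      rw [heq, hfPk]
    | succ m ih =>
      intro hm R' hR'
      have hm' : m ≤ k - 1 := le_trans (Nat.le_succ m) hm
      have hmk : m + 1 < k := by omega
      obtain ⟨R0, hR0D, R1, hR1D, hadj, htR0, htR1, hrk1, hrk1'⟩ := hpath.2 m hmk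
      have h0 : f (Function.update P j ⟨R0, hR0D⟩) = v (k - 1) := ih hm' ⟨R0, hR0D⟩ htR0
      set x := f (Function.update P j ⟨R1, hR1D⟩) with hx
      have hupd : Function.update (Function.update P j ⟨R0, hR0D⟩) j (⟨R1, hR1D⟩ : D)
          = Function.update P j ⟨R1, hR1D⟩ := by
        simp
      have hupd2 : Function.update (Function.update P j ⟨R1, hR1D⟩) j (⟨R0, hR0D⟩ : D)
          = Function.update P j ⟨R0, hR0D⟩ := by
        simp
      have lsp1 : ¬ rk R0 x < rk R0 (v (k - 1)) := by
        have h := hlsp (Function.update P j ⟨R0, hR0D⟩) j ⟨R1, hR1D⟩ (by simpa using hadj)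
        rw [hupd, h0] at h
        simpa [SPrefers, ← hx] using h
      have lsp2 : ¬ rk R1 (v (k - 1)) < rk R1 x := by
        have h := hlsp (Function.update P j ⟨R1, hR1D⟩) j ⟨R0, hR0D⟩
          (by simpa using hadj.symm')
        rw [hupd2, h0] at h
        simpa [SPrefers, ← hx] using h
      have hr00 : rk R0 (v m) = 0 := htR0 ▸ Pref.rk_top' R0
      have hr10 : rk R1 (v (m + 1)) = 0 := htR1 ▸ Pref.rk_top' R1
      have hx1 : x = v (k - 1) := by
        by_cases hcase : m + 1 = k - 1
        · have h0' : rk R1 (v (k - 1)) = 0 := by rw [← hcase]; exact hr10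
          have : rk R1 x = 0 := by omega
          rw [R1.eq_top_of_rk' this, htR1, hcase]
        · have hmlt : m + 1 < k - 1 := lt_of_le_of_ne hm hcase
          have vmne : v m ≠ v (m + 1) := vne m (m+1) (by omega) (by omega) (by omega)
          have vmk : v m ≠ v (k - 1) := vne m (k-1) (by omega) (by omega) (by omega)
          have vm1k : v (m + 1) ≠ v (k - 1) := vne (m+1) (k-1) (by omega) (by omega) (by omega)
          have hrk_ne0 : rk R0 (v (k - 1)) ≠ 0 := fun h =>
            vmk (R0.rk_injective' (hr00.trans h.symm))
          have hrk_ne1 : rk R0 (v (k - 1)) ≠ 1 := fun h =>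
            vm1k (R0.rk_injective' (hrk1.trans h.symm))
          have hx_ne0 : x ≠ v m := by
            intro h; rw [h, hr00] at lsp1; omega
          have hx_ne1 : x ≠ v (m + 1) := by
            intro h; rw [h, hrk1] at lsp1; omega
          obtain ⟨a, b, ha1, ha2, ha3, ha4⟩ := hadj
          have hab : a ≠ b := by intro h; rw [h] at ha1; omega
          have hma : v m = a ∨ v m = b := by
            by_contra h
            push_neg at h
            have := ha4 (v m) h.1 h.2
            omega
          have hm1 : v (m + 1) = a ∨ v (m + 1) = b := by
            by_contra h
            push_neg at h
            have := ha4 (v (m + 1)) h.1 h.2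
            omega
          have hsw : ∀ c, c ≠ v m → c ≠ v (m + 1) → rk R0 c = rk R1 c := by
            intro c hc0 hc1
            rcases hma with h1 | h1 <;> rcases hm1 with h2 | h2
            · exact absurd (h1.trans h2.symm) vmne
            · exact ha4 c (h1 ▸ hc0) (h2 ▸ hc1)
            · exact ha4 c (h2 ▸ hc1) (h1 ▸ hc0)
            · exact absurd (h1.trans h2.symm) vmne
          have e1 : rk R0 x = rk R1 x := hsw x hx_ne0 hx_ne1
          have e2 : rk R0 (v (k - 1)) = rk R1 (v (k - 1)) :=
            hsw (v (k - 1)) (Ne.symm vmk) (Ne.symm vm1k)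
          exact R0.rk_injective' (by omega)
      have heq : f (Function.update P j R') = f (Function.update P j ⟨R1, hR1D⟩) := by
        apply hto
        intro t
        by_cases ht : t = j
        · subst ht; simp [hR', htR1]
        · simp [Function.update_of_ne ht]
      rw [heq, ← hx, hx1]
  intro Q hQ
  exact main (k - 1) le_rfl Q hQ
end

section
/- Let f: D^2 → A be unanimous and strategy-proof (not merely locally), and let (a,b) be an edge of G(D). Then either f(P_1,P_2) = a for all profiles with r_1(P_1) = a, r_1(P_2) = b, or f(P_1,P_2) = b for all such profiles. (Note: tops-onlyness is not assumed here.) -/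
open Relation

open Pref

variable {A : Type*} [Fintype A] [Nonempty A]

section Helpers

variable {A : Type*} [Fintype A] [Nonempty A]

lemma rk_top_eq (P : Pref A) : Pref.rk P (Pref.top P) = 0 := by
  simp [Pref.rk, Pref.top]

lemma rk_inj_s16 (P : Pref A) {x y : A} (h : Pref.rk P x = Pref.rk P y) : x = y :=
  P.injective (Fin.ext h)

lemma eq_of_rk_zero (P : Pref A) {x : A} (htop : Pref.top P = x)
    {y : A} (h : Pref.rk P y = 0) : y = x := by
  subst htop
  exact rk_inj_s16 P (by rw [h, rk_top_eq])

lemma upd0 {D : Set (Pref A)} (q1 q2 r : D) :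
    Function.update (![q1, q2] : Fin 2 → D) 0 r = ![r, q2] := by
  funext i; fin_cases i <;> simp [Function.update]

lemma upd1 {D : Set (Pref A)} (q1 q2 r : D) :
    Function.update (![q1, q2] : Fin 2 → D) 1 r = ![q1, r] := by
  funext i; fin_cases i <;> simp [Function.update]

end Helpers

/-- Claim 9: for an edge `(a,b)` of `G(D)`, a unanimous and (globally)
strategy-proof two-voter scf always selects `a`, or always selects `b`, on
profiles with tops `(a,b)` (tops-onlyness not assumed). -/
theorem stmt16 {A : Type*} [Fintype A] [Nonempty A] (hA : 3 ≤ Fintype.card A)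
    (D : Set (Pref A)) (hmr : MinimallyRich D) (f : (Fin 2 → D) → A)
    (hu : Unanimous D f) (hsp : StrategyProof D f)
    (a b : A) (hab : EdgeD D a b) :
    (∀ P : Fin 2 → D, Pref.top (P 0 : Pref A) = a →
        Pref.top (P 1 : Pref A) = b → f P = a) ∨
    (∀ P : Fin 2 → D, Pref.top (P 0 : Pref A) = a →
        Pref.top (P 1 : Pref A) = b → f P = b) := by
  classical
  obtain ⟨Ps, hPs, Ps', hPs', _hadj, htopPs, htopPs', hrkb, hrka⟩ := hab
  set p : D := ⟨Ps, hPs⟩ with hp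
  set p' : D := ⟨Ps', hPs'⟩ with hp'
  have hra : Pref.rk Ps a = 0 := by rw [← htopPs]; exact rk_top_eq Ps
  have hrb' : Pref.rk Ps' b = 0 := by rw [← htopPs']; exact rk_top_eq Ps'
  -- unanimity on constant profiles
  have huni : ∀ q : D, f ![q, q] = Pref.top (q : Pref A) := by
    intro q
    apply hu
    intro i; fin_cases i <;> rfl
  -- the pair of general lemmas extracting SP inequalities
  have hsp0 : ∀ (q1 q2 r : D),
      ¬ Pref.rk (q1 : Pref A) (f ![r, q2]) < Pref.rk (q1 : Pref A) (f ![q1, q2]) := by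
    intro q1 q2 r
    have := hsp ![q1, q2] 0 r
    rwa [upd0] at this
  have hsp1 : ∀ (q1 q2 r : D),
      ¬ Pref.rk (q2 : Pref A) (f ![q1, r]) < Pref.rk (q2 : Pref A) (f ![q1, q2]) := by
    intro q1 q2 r
    have := hsp ![q1, q2] 1 r
    rwa [upd1] at this
  -- f (p, p') is a or b
  have hppab : f ![p, p'] = a ∨ f ![p, p'] = b := by
    have h := hsp0 p p' p'
    rw [huni p', htopPs'] at h
    have h2 : Pref.rk Ps (f ![p, p']) ≤ 1 :=
      le_trans (not_lt.mp h) (le_of_eq hrkb)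
    interval_cases h3 : Pref.rk Ps (f ![p, p'])
    · exact Or.inl (rk_inj_s16 Ps (by rw [h3, hra]))
    · exact Or.inr (rk_inj_s16 Ps (by rw [h3, hrkb]))
  rcases hppab with hcase | hcase
  · -- always a
    left
    have step1 : ∀ q2 : D, Pref.top (q2 : Pref A) = b → f ![p, q2] = a := by
      intro q2 htq2
      -- f (p, q2) is a or b
      have h := hsp0 p q2 q2
      rw [huni q2, htq2] at h
      have h2 : Pref.rk Ps (f ![p, q2]) ≤ 1 :=
        le_trans (not_lt.mp h) (le_of_eq hrkb)
      have hne : f ![p, q2] ≠ b := by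
        intro heq
        have h3 := hsp1 p p' q2
        rw [hcase, heq] at h3
        exact h3 (by rw [hrb', hrka]; norm_num)
      interval_cases h3 : Pref.rk Ps (f ![p, q2])
      · exact rk_inj_s16 Ps (by rw [h3, hra])
      · exact absurd (rk_inj_s16 Ps (by rw [h3, hrkb])) hne
    intro P h0 h1
    have hPeq : P = ![P 0, P 1] := by
      funext i; fin_cases i <;> rfl
    rw [hPeq]
    have h := hsp0 (P 0) (P 1) p
    rw [step1 (P 1) h1] at h
    have : Pref.rk (P 0 : Pref A) a = 0 := by rw [← h0]; exact rk_top_eq _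
    rw [this] at h
    exact (eq_of_rk_zero (P 0 : Pref A) h0 (Nat.eq_zero_of_not_pos h)).symm ▸ rfl
  · -- always b
    right
    have step1 : ∀ q1 : D, Pref.top (q1 : Pref A) = a → f ![q1, p'] = b := by
      intro q1 htq1
      have h := hsp1 q1 p' q1
      rw [huni q1, htq1] at h
      have h2 : Pref.rk Ps' (f ![q1, p']) ≤ 1 :=
        le_trans (not_lt.mp h) (le_of_eq hrka)
      have hne : f ![q1, p'] ≠ a := by
        intro heq
        have h3 := hsp0 p p' q1
        rw [hcase, heq] at h3
        exact h3 (by rw [hra, hrkb]; norm_num)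
      interval_cases h3 : Pref.rk Ps' (f ![q1, p'])
      · exact rk_inj_s16 Ps' (by rw [h3, hrb'])
      · exact absurd (rk_inj_s16 Ps' (by rw [h3, hrka])) hne
    intro P h0 h1
    have hPeq : P = ![P 0, P 1] := by
      funext i; fin_cases i <;> rfl
    rw [hPeq]
    have h := hsp1 (P 0) (P 1) p'
    rw [step1 (P 0) h0] at h
    have : Pref.rk (P 1 : Pref A) b = 0 := by rw [← h1]; exact rk_top_eq _
    rw [this] at h
    exact eq_of_rk_zero (P 1 : Pref A) h1 (Nat.eq_zero_of_not_pos h)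
end
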